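/- arXiv:1901.01476 — 2 statements merged into one kernel-verified Lean document; each statement's English description precedes it below -/
import Mathlib

section
/- If every Θ6-graph on n points in general position has a matching of size at least (n−1)/2 (for all n), then β(n) ≥ n − 1 for all n, where β(n) is the minimum over all sets P of n points in general position of the minimum size of a blocking set of G⋆(P). -/
noncomputable section

/-- Points in the plane. -/
abbrev Pt : Type := ℝ × ℝ

/-- `P` is in general position: no line through two points of `P` makes an angle of
0°, 60°, or 120° with the horizontal. -/
def GenPos (P : Finset Pt) : Prop :=
  ∀ p ∈ P, ∀ q ∈ P, p ≠ q →
    p.2 ≠ q.2 ∧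
    q.2 - p.2 ≠ Real.sqrt 3 * (q.1 - p.1) ∧
    q.2 - p.2 ≠ -Real.sqrt 3 * (q.1 - p.1)

/-- First cone coordinate (height). -/
def cA (z : Pt) : ℝ := z.2
/-- Second cone coordinate. -/
def cB (z : Pt) : ℝ := Real.sqrt 3 * z.1 + z.2
/-- Third cone coordinate. -/
def cC (z : Pt) : ℝ := -Real.sqrt 3 * z.1 + z.2

/-- The smallest upward equilateral triangle (horizontal bottom side) having both
`p` and `q` on its boundary, as a closed set. -/
def upTri (p q : Pt) : Set Pt :=
  {x | min (cA p) (cA q) ≤ cA x ∧ cB x ≤ max (cB p) (cB q) ∧ cC x ≤ max (cC p) (cC q)}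

/-- The interior of `upTri p q`. -/
def upTriInt (p q : Pt) : Set Pt :=
  {x | min (cA p) (cA q) < cA x ∧ cB x < max (cB p) (cB q) ∧ cC x < max (cC p) (cC q)}

/-- The smallest downward equilateral triangle (horizontal top side) having both
`p` and `q` on its boundary, as a closed set. -/
def downTri (p q : Pt) : Set Pt :=
  {x | cA x ≤ max (cA p) (cA q) ∧ min (cB p) (cB q) ≤ cB x ∧ min (cC p) (cC q) ≤ cC x}

/-- The interior of `downTri p q`. -/
def downTriInt (p q : Pt) : Set Pt :=
  {x | cA x < max (cA p) (cA q) ∧ min (cB p) (cB q) < cB x ∧ min (cC p) (cC q) < cC x}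

lemma upTriInt_comm (p q : Pt) : upTriInt p q = upTriInt q p := by
  ext x
  simp only [upTriInt, Set.mem_setOf_eq]
  rw [min_comm (cA p) (cA q), max_comm (cB p) (cB q), max_comm (cC p) (cC q)]

lemma downTriInt_comm (p q : Pt) : downTriInt p q = downTriInt q p := by
  ext x
  simp only [downTriInt, Set.mem_setOf_eq]
  rw [max_comm (cA p) (cA q), min_comm (cB p) (cB q), min_comm (cC p) (cC q)]

/-- `upTri p q` is empty with respect to `P`: its interior contains no point of `P`. -/
def EmptyUp (P : Finset Pt) (p q : Pt) : Prop := ∀ r ∈ P, r ∉ upTriInt p q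

/-- `downTri p q` is empty with respect to `P`: its interior contains no point of `P`. -/
def EmptyDown (P : Finset Pt) (p q : Pt) : Prop := ∀ r ∈ P, r ∉ downTriInt p q

/-- The Θ₆-graph `G⋆(P)`: vertices are the points of `P`, and `p` is adjacent to `q`
iff `△(p,q)` or `▽(p,q)` is empty with respect to `P`. -/
def theta6 (P : Finset Pt) : SimpleGraph {x // x ∈ P} where
  Adj p q := p ≠ q ∧ (EmptyUp P p.1 q.1 ∨ EmptyDown P p.1 q.1)
  symm := by
    constructor
    rintro p q ⟨hne, h⟩
    refine ⟨hne.symm, ?_⟩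
    unfold EmptyUp EmptyDown at h ⊢
    rcases h with h | h
    · exact Or.inl (by rw [upTriInt_comm]; exact h)
    · exact Or.inr (by rw [downTriInt_comm]; exact h)
  loopless := ⟨fun p h => h.1 rfl⟩

/-- `B` blocks `G⋆(P)`: every empty triangle introducing an edge of `G⋆(P)` contains a
point of `B` in its interior. -/
def Blocks (P B : Finset Pt) : Prop :=
  ∀ p ∈ P, ∀ q ∈ P, p ≠ q →
    (EmptyUp P p q → ∃ b ∈ B, b ∈ upTriInt p q) ∧
    (EmptyDown P p q → ∃ b ∈ B, b ∈ downTriInt p q)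

/-- `betaMin n`: the minimum, over sets `P` of `n` points in general position, of the
minimum size of a blocking set of `G⋆(P)`. -/
def betaMin (n : ℕ) : ℕ :=
  sInf {k | ∃ P B : Finset Pt, P.card = n ∧ GenPos P ∧ Blocks P B ∧ B.card = k}

/-- An (up or down) triangle described by two points and an orientation flag:
its interior. -/
def triIntr (t : Pt × Pt × Bool) : Set Pt :=
  if t.2.2 then upTriInt t.1 t.2.1 else downTriInt t.1 t.2.1

/-- An (up or down) triangle described by two points and an orientation flag:
the closed triangle. -/
def triCl (t : Pt × Pt × Bool) : Set Pt :=
  if t.2.2 then upTri t.1 t.2.1 else downTri t.1 t.2.1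

/-- `t` describes an empty triangle of `P` (one that introduces an edge of `G⋆(P)`). -/
def IsEmptyTriOf (P : Finset Pt) (t : Pt × Pt × Bool) : Prop :=
  t.1 ∈ P ∧ t.2.1 ∈ P ∧ t.1 ≠ t.2.1 ∧ ∀ r ∈ P, r ∉ triIntr t

/-!
If `B` blocks `G⋆(P)`, move every point of `B` slightly so that `P ∪ B` becomes a point set in
general position while each moved point stays inside every open triangle that contained the
original one; the moved set `B'` still blocks `G⋆(P)`. Hence no edge of `G⋆(P ∪ B')` joins two
points of `P`, so every edge of a matching of `G⋆(P ∪ B')` has an endpoint in `B'`, and the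
matching has at most `|B'| ≤ |B|` edges. Comparing with the assumed lower bound
`(n + |B'| - 1) / 2` gives `n - 1 ≤ |B|`.
-/

open Filter Topology

def HasNearPerfectMatchings : Prop :=
  ∀ P : Finset Pt, GenPos P →
    ∃ M : (theta6 P).Subgraph, M.IsMatching ∧ ((P.card : ℝ) - 1) / 2 ≤ (M.edgeSet.ncard : ℝ)

lemma SimpleGraph.Subgraph.IsMatching.ncard_edgeSet_le {V : Type*} [Finite V]
    {G : SimpleGraph V} {M : G.Subgraph} (hM : M.IsMatching) {S : Set V}
    (hS : ∀ e ∈ M.edgeSet, ∃ v ∈ S, v ∈ e) : M.edgeSet.ncard ≤ S.ncard := by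
  classical
  have := Fintype.ofFinite V
  rw [Set.ncard_eq_toFinset_card', Set.ncard_eq_toFinset_card']
  refine Finset.card_le_card_of_forall_subsingleton (fun e v => v ∈ e) (by simpa using hS) ?_
  rintro v - e₁ ⟨he₁, hv₁⟩ e₂ ⟨he₂, hv₂⟩
  obtain ⟨w₁, rfl⟩ := Sym2.mem_iff_exists.mp hv₁
  obtain ⟨w₂, rfl⟩ := Sym2.mem_iff_exists.mp hv₂
  simp only [Set.mem_toFinset, SimpleGraph.Subgraph.mem_edgeSet] at he₁ he₂
  rw [hM.eq_of_adj_left he₁ he₂]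

def Transverse (p q : Pt) : Prop := cA p ≠ cA q ∧ cB p ≠ cB q ∧ cC p ≠ cC q

lemma Transverse.symm {p q : Pt} (h : Transverse p q) : Transverse q p :=
  ⟨h.1.symm, h.2.1.symm, h.2.2.symm⟩

lemma Transverse.ne {p q : Pt} (h : Transverse p q) : p ≠ q := by
  rintro rfl
  exact h.1 rfl

lemma genPos_iff {P : Finset Pt} : GenPos P ↔ ∀ p ∈ P, ∀ q ∈ P, p ≠ q → Transverse p q := by
  unfold GenPos Transverse cA cB cC
  refine forall₂_congr fun p _ => forall₂_congr fun q _ => imp_congr_right fun _ => ?_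
  constructor
  · rintro ⟨hA, hC, hB⟩
    exact ⟨hA, fun h => hB (by linarith), fun h => hC (by linarith)⟩
  · rintro ⟨hA, hB, hC⟩
    exact ⟨hA, fun h => hC (by linarith), fun h => hB (by linarith)⟩

lemma GenPos.insert {S : Finset Pt} (hS : GenPos S) {x : Pt} (hx : ∀ s ∈ S, Transverse s x) :
    GenPos (insert x S) := by
  rw [genPos_iff] at hS ⊢
  intro p hp q hq hpq
  rcases Finset.mem_insert.mp hp with rfl | hpS <;> rcases Finset.mem_insert.mp hq with hqx | hqS
  · exact absurd hqx.symm hpq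
  · exact (hx q hqS).symm
  · exact hqx ▸ hx p hpS
  · exact hS p hpS q hqS hpq

lemma exists_genPos_card (n : ℕ) : ∃ P : Finset Pt, P.card = n ∧ GenPos P := by
  have hinj : Function.Injective fun i : ℕ => ((0 : ℝ), (i : ℝ)) :=
    fun i j h => by simpa using congrArg Prod.snd h
  refine ⟨(Finset.range n).image fun i : ℕ => ((0 : ℝ), (i : ℝ)), by
    rw [Finset.card_image_of_injective _ hinj, Finset.card_range], ?_⟩
  simp only [GenPos, Finset.mem_image]
  rintro _ ⟨i, -, rfl⟩ _ ⟨j, -, rfl⟩ hne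
  have hij : i ≠ j := by
    rintro rfl
    exact hne rfl
  simp [sub_eq_zero, hij, eq_comm]

lemma cA_midpoint (p q : Pt) : cA (midpoint ℝ p q) = (cA p + cA q) / 2 := by
  simp only [cA, midpoint_eq_smul_add, invOf_eq_inv, Prod.smul_snd, Prod.snd_add, smul_eq_mul]
  ring

lemma cB_midpoint (p q : Pt) : cB (midpoint ℝ p q) = (cB p + cB q) / 2 := by
  simp only [cB, midpoint_eq_smul_add, invOf_eq_inv, Prod.smul_fst, Prod.smul_snd, Prod.fst_add,
    Prod.snd_add, smul_eq_mul]
  ring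

lemma cC_midpoint (p q : Pt) : cC (midpoint ℝ p q) = (cC p + cC q) / 2 := by
  simp only [cC, midpoint_eq_smul_add, invOf_eq_inv, Prod.smul_fst, Prod.smul_snd, Prod.fst_add,
    Prod.snd_add, smul_eq_mul]
  ring

lemma min_lt_add_div_two {K : Type*} [Field K] [LinearOrder K] [IsStrictOrderedRing K] {a b : K}
    (h : a ≠ b) : min a b < (a + b) / 2 := by
  rcases h.lt_or_gt with h | h
  · exact min_lt_iff.mpr (Or.inl (by linarith))
  · exact min_lt_iff.mpr (Or.inr (by linarith))

lemma add_div_two_lt_max {K : Type*} [Field K] [LinearOrder K] [IsStrictOrderedRing K] {a b : K}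
    (h : a ≠ b) : (a + b) / 2 < max a b := by
  rcases h.lt_or_gt with h | h
  · exact lt_max_iff.mpr (Or.inr (by linarith))
  · exact lt_max_iff.mpr (Or.inl (by linarith))

lemma Transverse.midpoint_mem_upTriInt {p q : Pt} (h : Transverse p q) :
    midpoint ℝ p q ∈ upTriInt p q := by
  refine ⟨?_, ?_, ?_⟩
  · rw [cA_midpoint]; exact min_lt_add_div_two h.1
  · rw [cB_midpoint]; exact add_div_two_lt_max h.2.1
  · rw [cC_midpoint]; exact add_div_two_lt_max h.2.2

lemma Transverse.midpoint_mem_downTriInt {p q : Pt} (h : Transverse p q) :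
    midpoint ℝ p q ∈ downTriInt p q := by
  refine ⟨?_, ?_, ?_⟩
  · rw [cA_midpoint]; exact add_div_two_lt_max h.1
  · rw [cB_midpoint]; exact min_lt_add_div_two h.2.1
  · rw [cC_midpoint]; exact min_lt_add_div_two h.2.2

lemma blocks_image_midpoint {P : Finset Pt} (hP : GenPos P) :
    Blocks P ((P ×ˢ P).image fun z => midpoint ℝ z.1 z.2) := by
  intro p hp q hq hpq
  have hmem : midpoint ℝ p q ∈ (P ×ˢ P).image fun z => midpoint ℝ z.1 z.2 :=
    Finset.mem_image.mpr ⟨(p, q), Finset.mem_product.mpr ⟨hp, hq⟩, rfl⟩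
  have hpq' := genPos_iff.mp hP p hp q hq hpq
  exact ⟨fun _ => ⟨_, hmem, hpq'.midpoint_mem_upTriInt⟩,
    fun _ => ⟨_, hmem, hpq'.midpoint_mem_downTriInt⟩⟩

lemma exists_blocks_card_eq_betaMin (n : ℕ) :
    ∃ P B : Finset Pt, P.card = n ∧ GenPos P ∧ Blocks P B ∧ B.card = betaMin n := by
  obtain ⟨P, hcard, hP⟩ := exists_genPos_card n
  -- `sInf ∅ = 0`, so the infimum defining `betaMin n` has to be shown to be attained.
  have hne : {k | ∃ P B : Finset Pt, P.card = n ∧ GenPos P ∧ Blocks P B ∧ B.card = k}.Nonempty :=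
    ⟨_, P, _, hcard, hP, blocks_image_midpoint hP, rfl⟩
  exact Nat.sInf_mem hne

lemma continuous_cA : Continuous cA := by unfold cA; fun_prop

lemma continuous_cB : Continuous cB := by unfold cB; fun_prop

lemma continuous_cC : Continuous cC := by unfold cC; fun_prop

lemma isOpen_upTriInt (p q : Pt) : IsOpen (upTriInt p q) :=
  (isOpen_lt continuous_const continuous_cA).and
    ((isOpen_lt continuous_cB continuous_const).and (isOpen_lt continuous_cC continuous_const))

lemma isOpen_downTriInt (p q : Pt) : IsOpen (downTriInt p q) :=
  (isOpen_lt continuous_cA continuous_const).and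
    ((isOpen_lt continuous_const continuous_cB).and (isOpen_lt continuous_const continuous_cC))

def SharesTriangles (P : Finset Pt) (b x : Pt) : Prop :=
  ∀ p ∈ P, ∀ q ∈ P, (b ∈ upTriInt p q → x ∈ upTriInt p q) ∧
    (b ∈ downTriInt p q → x ∈ downTriInt p q)

lemma eventually_imp_mem_of_isOpen {X : Type*} [TopologicalSpace X] {U : Set X} (hU : IsOpen U)
    (b : X) :
    ∀ᶠ x in 𝓝 b, b ∈ U → x ∈ U := by
  by_cases hb : b ∈ U
  · exact eventually_of_mem (hU.mem_nhds hb) fun _ hx _ => hx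
  · exact Eventually.of_forall fun _ h => absurd h hb

lemma eventually_sharesTriangles (P : Finset Pt) (b : Pt) :
    ∀ᶠ x in 𝓝 b, SharesTriangles P b x := by
  unfold SharesTriangles
  refine (eventually_all_finset P).mpr fun p _ => (eventually_all_finset P).mpr fun q _ => ?_
  exact (eventually_imp_mem_of_isOpen (isOpen_upTriInt p q) b).and
    (eventually_imp_mem_of_isOpen (isOpen_downTriInt p q) b)

lemma Blocks.of_sharesTriangles {P B B' : Finset Pt} (hB : Blocks P B)
    (hB' : ∀ b ∈ B, ∃ x ∈ B', SharesTriangles P b x) : Blocks P B' := by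
  intro p hp q hq hpq
  refine ⟨fun hempty => ?_, fun hempty => ?_⟩
  · obtain ⟨b, hb, hbpq⟩ := (hB p hp q hq hpq).1 hempty
    obtain ⟨x, hx, hbx⟩ := hB' b hb
    exact ⟨x, hx, (hbx p hp q hq).1 hbpq⟩
  · obtain ⟨b, hb, hbpq⟩ := (hB p hp q hq hpq).2 hempty
    obtain ⟨x, hx, hbx⟩ := hB' b hb
    exact ⟨x, hx, (hbx p hp q hq).2 hbpq⟩

/-- A vertical shift by `t` adds `t` to all three cone coordinates, so along a vertical line
each point of `S` rules out at most three positions. -/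
lemma exists_transverse_of_eventually {b : Pt} {π : Pt → Prop} (hπ : ∀ᶠ x in 𝓝 b, π x)
    (S : Finset Pt) : ∃ x, π x ∧ ∀ s ∈ S, Transverse s x := by
  let shift : ℝ → Pt := fun t => (b.1, b.2 + t)
  have hshift : Tendsto shift (𝓝[≠] 0) (𝓝 b) := by
    refine (Continuous.tendsto' (by fun_prop) 0 b (by simp [shift])).mono_left
      nhdsWithin_le_nhds
  let bad : Finset ℝ := S.biUnion fun s => {cA s - cA b, cB s - cB b, cC s - cC b}
  have hgood : ∀ᶠ t in 𝓝[≠] (0 : ℝ), t ∉ bad :=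
    nhdsNE_le_cofinite 0 bad.eventually_cofinite_notMem
  obtain ⟨t, hπt, ht⟩ := ((hshift.eventually hπ).and hgood).exists
  have hcoord : cA (shift t) = cA b + t ∧ cB (shift t) = cB b + t ∧ cC (shift t) = cC b + t := by
    refine ⟨rfl, ?_, ?_⟩ <;>
    · simp only [shift, cB, cC]
      ring
  refine ⟨shift t, hπt, fun s hs => ?_⟩
  have hmem : ∀ c ∈ ({cA s - cA b, cB s - cB b, cC s - cC b} : Finset ℝ), t ≠ c :=
    fun c hc htc => ht (Finset.mem_biUnion.mpr ⟨s, hs, htc ▸ hc⟩)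
  exact ⟨fun h => hmem (cA s - cA b) (by simp) (by linarith [hcoord.1]),
    fun h => hmem (cB s - cB b) (by simp) (by linarith [hcoord.2.1]),
    fun h => hmem (cC s - cC b) (by simp) (by linarith [hcoord.2.2])⟩

lemma exists_transverse_sharesTriangles {P : Finset Pt} (hP : GenPos P) (B : Finset Pt) :
    ∃ B' : Finset Pt, B'.card ≤ B.card ∧ Disjoint P B' ∧ GenPos (P ∪ B') ∧
      ∀ b ∈ B, ∃ x ∈ B', SharesTriangles P b x := by
  induction B using Finset.induction with
  | empty => exact ⟨∅, le_rfl, Finset.disjoint_empty_right P, by simpa using hP, by simp⟩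
  | @insert a B ha ih =>
    obtain ⟨B', hcard, hdisj, hgen, hshares⟩ := ih
    obtain ⟨x, hax, hx⟩ := exists_transverse_of_eventually (eventually_sharesTriangles P a) (P ∪ B')
    have hxP : x ∉ P := fun h => (hx x (Finset.mem_union_left _ h)).ne rfl
    refine ⟨insert x B', ?_, Finset.disjoint_insert_right.mpr ⟨hxP, hdisj⟩, ?_, ?_⟩
    · rw [Finset.card_insert_of_notMem ha]
      exact (Finset.card_insert_le _ _).trans (by omega)
    · rw [Finset.union_insert]
      exact hgen.insert hx
    · intro b hb
      rcases Finset.mem_insert.mp hb with rfl | hb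
      · exact ⟨x, Finset.mem_insert_self _ _, hax⟩
      · obtain ⟨y, hy, hby⟩ := hshares b hb
        exact ⟨y, Finset.mem_insert_of_mem hy, hby⟩

lemma theta6_not_adj_of_blocks {P B Q : Finset Pt} (hPQ : P ⊆ Q) (hBQ : B ⊆ Q)
    (hB : Blocks P B) {u v : Q} (hu : u.1 ∈ P) (hv : v.1 ∈ P) : ¬ (theta6 Q).Adj u v := by
  rintro ⟨huv, hempty | hempty⟩
  · obtain ⟨b, hb, hbuv⟩ := (hB _ hu _ hv (Subtype.val_injective.ne huv)).1
      fun r hr => hempty r (hPQ hr)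
    exact hempty b (hBQ hb) hbuv
  · obtain ⟨b, hb, hbuv⟩ := (hB _ hu _ hv (Subtype.val_injective.ne huv)).2
      fun r hr => hempty r (hPQ hr)
    exact hempty b (hBQ hb) hbuv

lemma card_sub_one_le_card_of_blocks (hmu : HasNearPerfectMatchings) {P B : Finset Pt}
    (hP : GenPos P) (hB : Blocks P B) : (P.card : ℝ) - 1 ≤ B.card := by
  obtain ⟨B', hcard, hdisj, hgen, hshares⟩ := exists_transverse_sharesTriangles hP B
  have hB' : Blocks P B' := hB.of_sharesTriangles hshares
  obtain ⟨M, hM, hsize⟩ := hmu _ hgen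
  have hcover : ∀ e ∈ M.edgeSet, ∃ v ∈ Subtype.val ⁻¹' (B' : Set Pt), v ∈ e := by
    intro e he
    induction e using Sym2.ind with
    | h u v =>
      by_contra! hcon
      have hu : u.1 ∈ P :=
        (Finset.mem_union.mp u.2).resolve_right fun h => hcon u h (Sym2.mem_mk_left _ _)
      have hv : v.1 ∈ P :=
        (Finset.mem_union.mp v.2).resolve_right fun h => hcon v h (Sym2.mem_mk_right _ _)
      exact theta6_not_adj_of_blocks Finset.subset_union_left Finset.subset_union_right hB'
        hu hv (M.adj_sub he)
  have hmatch : M.edgeSet.ncard ≤ B'.card := by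
    have hrange : (B' : Set Pt) ⊆ Set.range (Subtype.val : (P ∪ B' : Finset Pt) → Pt) :=
      fun x hx => ⟨⟨x, Finset.mem_union_right _ hx⟩, rfl⟩
    simpa [Set.ncard_preimage_of_injective_subset_range Subtype.val_injective hrange] using
      hM.ncard_edgeSet_le hcover
  rw [Finset.card_union_of_disjoint hdisj, Nat.cast_add] at hsize
  have : (M.edgeSet.ncard : ℝ) ≤ B'.card := by exact_mod_cast hmatch
  have : (B'.card : ℝ) ≤ B.card := by exact_mod_cast hcard
  linarith

/-- If every Θ₆-graph on `n` points in general position has a matching of size at least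
`(n−1)/2`, then `β(n) ≥ n − 1` for all `n`. -/
theorem beta_of_near_perfect_matching
    (hmu : ∀ P : Finset Pt, GenPos P →
      ∃ M : (theta6 P).Subgraph, M.IsMatching ∧
        ((P.card : ℝ) - 1) / 2 ≤ (M.edgeSet.ncard : ℝ)) :
    ∀ n : ℕ, (n : ℝ) - 1 ≤ (betaMin n : ℝ) := by
  intro n
  obtain ⟨P, B, rfl, hP, hB, hβ⟩ := exists_blocks_card_eq_betaMin n
  rw [← hβ]
  exact card_sub_one_le_card_of_blocks hmu hP hB
end
end

section
/- Every Θ6-graph on a set P of n points in the plane in general position has chromatic number at most 10 (it admits a proper 10-vertex-coloring) and contains an independent set of size at least n/10. -/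
noncomputable section

/-!
The Θ₆-graph has a vertex of degree at most 9, and deleting points only adds edges (empty
triangles stay empty), so it is 9-degenerate, hence 10-colourable, and its largest colour class
is an independent set of size at least `n/10`.

For the degree bound count every edge once, from its lower to its upper endpoint. Charging an
empty `△(p,q)` to the point of `{p, q}` at a corner of it, labelled by that corner, is injective
and never produces (lowest point, top corner); so there are at most `3n - 1` edges with `△`
empty, and by the point reflection `z ↦ -z` at most `3n - 1` with `▽` empty. The edges with both
triangles empty form a connected graph: a point inside `△(p,q)` or `▽(p,q)` is closer to both
`p` and `q` in the hexagonal distance. So at least `n - 1` edges are counted twice, there are at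
most `5n - 1` edges, and the average degree is below `10`.
-/

open Finset Pointwise

namespace SimpleGraph

variable {V : Type*}

theorem card_edgeFinset_eq_card_filter_lt (G : SimpleGraph V) [Fintype V] [DecidableEq V]
    [DecidableRel G.Adj] {β : Type*} [LinearOrder β] (f : V → β)
    (hf : ∀ v w, G.Adj v w → f v ≠ f w) :
    #G.edgeFinset = #{e : V × V | G.Adj e.1 e.2 ∧ f e.1 < f e.2} := by
  symm
  refine card_bij (fun e _ => s(e.1, e.2)) (fun e he => by simpa using (mem_filter.1 he).2.1)
    ?_ ?_
  · rintro ⟨a, b⟩ hab ⟨c, d⟩ hcd h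
    simp only [mem_filter, mem_univ, true_and] at hab hcd
    rcases Sym2.eq_iff.1 h with ⟨rfl, rfl⟩ | ⟨rfl, rfl⟩
    · rfl
    · exact absurd hab.2 hcd.2.not_gt
  · refine Sym2.ind fun a b hab => ?_
    have hab : G.Adj a b := by simpa using hab
    rcases (hf a b hab).lt_or_gt with h | h
    · exact ⟨(a, b), by simp [hab, h], rfl⟩
    · exact ⟨(b, a), by simp [hab.symm, h], Sym2.eq_swap⟩

theorem preconnected_of_forall_exists_closer (G : SimpleGraph V) [Finite V] {β : Type*}
    [LinearOrder β] (d : V → V → β)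
    (h : ∀ x y, x ≠ y → ¬G.Adj x y → ∃ z, d x z < d x y ∧ d z y < d x y) :
    G.Preconnected := by
  by_contra hG
  obtain ⟨x₀, y₀, h₀⟩ : ∃ x y, ¬G.Reachable x y := by simpa [Preconnected] using hG
  obtain ⟨⟨x, y⟩, hxy, hmin⟩ := Set.exists_min_image {e : V × V | ¬G.Reachable e.1 e.2}
    (fun e => d e.1 e.2) (Set.toFinite _) ⟨(x₀, y₀), h₀⟩
  have hxy' : x ≠ y := fun h => hxy (h ▸ Reachable.refl x)
  obtain ⟨z, hxz, hzy⟩ := h x y hxy' fun hadj => hxy hadj.reachable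
  have reach : ∀ a b, d a b < d x y → G.Reachable a b := fun a b hab =>
    not_not.1 fun hn => (hmin (a, b) hn).not_gt hab
  exact hxy ((reach x z hxz).trans (reach z y hzy))

theorem colorable_succ_of_forall_exists_card_adj_le (G : SimpleGraph V) [Fintype V]
    [DecidableEq V] [DecidableRel G.Adj] (k : ℕ)
    (h : ∀ s : Finset V, s.Nonempty → ∃ v ∈ s, #{w ∈ s | G.Adj v w} ≤ k) :
    G.Colorable (k + 1) := by
  suffices ∀ s : Finset V, ∃ c : V → Fin (k + 1), ∀ v ∈ s, ∀ w ∈ s, G.Adj v w → c v ≠ c w by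
    obtain ⟨c, hc⟩ := this univ
    exact ⟨Coloring.mk c fun hvw => hc _ (mem_univ _) _ (mem_univ _) hvw⟩
  intro s
  induction s using Finset.strongInduction with
  | H s ih =>
    rcases s.eq_empty_or_nonempty with rfl | hs
    · exact ⟨fun _ => 0, by simp⟩
    obtain ⟨v, hv, hdeg⟩ := h s hs
    obtain ⟨c, hc⟩ := ih (s.erase v) (erase_ssubset hv)
    obtain ⟨a, -, ha⟩ := exists_mem_notMem_of_card_lt_card
      (s := {w ∈ s | G.Adj v w}.image c) (t := univ)
      (by simpa using card_image_le.trans_lt (Nat.lt_succ_of_le hdeg))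
    have hfree : ∀ w ∈ s, G.Adj v w → a ≠ c w := fun w hw hvw haw =>
      ha (mem_image.2 ⟨w, mem_filter.2 ⟨hw, hvw⟩, haw.symm⟩)
    refine ⟨Function.update c v a, fun x hx y hy hxy => ?_⟩
    by_cases hxv : x = v
    · subst hxv
      simpa [hxy.ne'] using hfree y hy hxy
    by_cases hyv : y = v
    · subst hyv
      simpa [hxv] using (hfree x hx hxy.symm).symm
    simpa [hxv, hyv] using hc x (mem_erase.2 ⟨hxv, hx⟩) y (mem_erase.2 ⟨hyv, hy⟩) hxy

theorem Colorable.exists_indep_card_ge [Fintype V] {G : SimpleGraph V} {k : ℕ}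
    (h : G.Colorable k) :
    ∃ I : Finset V, (∀ v ∈ I, ∀ w ∈ I, ¬G.Adj v w) ∧ (Fintype.card V : ℝ) / k ≤ #I := by
  obtain ⟨C⟩ := h
  rcases k.eq_zero_or_pos with rfl | hk
  · exact ⟨∅, by simp⟩
  have : Nonempty (Fin k) := ⟨⟨0, hk⟩⟩
  obtain ⟨c, hc⟩ := Fintype.exists_le_card_fiber_of_nsmul_le_card C
    (b := (Fintype.card V : ℝ) / k) (by simp [mul_div_cancel₀, hk.ne'])
  refine ⟨({v | C v = c} : Finset V), fun v hv w hw hvw => ?_, hc⟩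
  simp only [mem_filter, mem_univ, true_and] at hv hw
  exact C.valid hvw (hv.trans hw.symm)

end SimpleGraph

lemma cB_add_cC (z : Pt) : cB z + cC z = 2 * cA z := by
  simp only [cA, cB, cC]; ring

@[simp] lemma cA_neg (z : Pt) : cA (-z) = -cA z := by simp [cA]

@[simp] lemma cB_neg (z : Pt) : cB (-z) = -cB z := by simp [cB]; ring

@[simp] lemma cC_neg (z : Pt) : cC (-z) = -cC z := by simp [cC]; ring

lemma mem_upTriInt_iff {p q r : Pt} : r ∈ upTriInt p q ↔
    (cA p < cA r ∨ cA q < cA r) ∧ (cB r < cB p ∨ cB r < cB q) ∧ (cC r < cC p ∨ cC r < cC q) := by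
  simp only [upTriInt, Set.mem_ofPred_eq, min_lt_iff, lt_max_iff]

lemma neg_mem_upTriInt_neg {p q r : Pt} : -r ∈ upTriInt (-p) (-q) ↔ r ∈ downTriInt p q := by
  simp only [upTriInt, downTriInt, Set.mem_ofPred_eq, cA_neg, cB_neg, cC_neg, min_neg_neg,
    max_neg_neg, neg_lt_neg_iff]

lemma GenPos.mono {P Q : Finset Pt} (hP : GenPos P) (hQP : Q ⊆ P) : GenPos Q :=
  fun p hp q hq => hP p (hQP hp) q (hQP hq)

lemma GenPos.neg {P : Finset Pt} (hP : GenPos P) : GenPos (-P) := by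
  intro p hp q hq hpq
  obtain ⟨hA, hB, hC⟩ :=
    hP (-p) (mem_neg'.1 hp) (-q) (mem_neg'.1 hq) (neg_injective.ne hpq)
  simp only [Prod.fst_neg, Prod.snd_neg] at hA hB hC
  exact ⟨fun h => hA (by rw [h]), fun h => hB (by linear_combination -h),
    fun h => hC (by linear_combination -h)⟩

lemma GenPos.coord_ne {P : Finset Pt} (hP : GenPos P) {p q : Pt} (hp : p ∈ P) (hq : q ∈ P)
    (hpq : p ≠ q) : cA p ≠ cA q ∧ cB p ≠ cB q ∧ cC p ≠ cC q := by
  obtain ⟨hA, hB, hC⟩ := hP p hp q hq hpq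
  refine ⟨hA, fun h => hC ?_, fun h => hB ?_⟩
  · simp only [cB] at h; linarith
  · simp only [cC] at h; linarith

def hexDist (p q : Pt) : ℝ := max |cB p - cB q| (max |cC p - cC q| (2 * |cA p - cA q|))

lemma hexDist_comm (p q : Pt) : hexDist p q = hexDist q p := by
  simp only [hexDist, abs_sub_comm (cA p), abs_sub_comm (cB p), abs_sub_comm (cC p)]

lemma hexDist_neg (p q : Pt) : hexDist (-p) (-q) = hexDist p q := by
  simp only [hexDist, cA_neg, cB_neg, cC_neg, neg_sub_neg, abs_sub_comm (cA q),
    abs_sub_comm (cB q), abs_sub_comm (cC q)]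

lemma hexDist_lt_of_mem_upTriInt {p q r : Pt} (h : r ∈ upTriInt p q) :
    hexDist p r < hexDist p q := by
  obtain ⟨hA, hB, hC⟩ := mem_upTriInt_iff.1 h
  have hBd : |cB p - cB q| ≤ hexDist p q := le_max_left _ _
  have hCd : |cC p - cC q| ≤ hexDist p q := (le_max_left _ _).trans (le_max_right _ _)
  have hAd : 2 * |cA p - cA q| ≤ hexDist p q := (le_max_right _ _).trans (le_max_right _ _)
  have := cB_add_cC p; have := cB_add_cC q; have := cB_add_cC r
  generalize hexDist p q = M at hBd hCd hAd
  rw [abs_le] at hBd hCd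
  rw [← le_div_iff₀' two_pos, abs_le] at hAd
  simp only [hexDist, max_lt_iff, abs_lt, ← lt_div_iff₀' (two_pos (α := ℝ))]
  rcases hA with hA | hA <;> rcases hB with hB | hB <;> rcases hC with hC | hC <;>
    refine ⟨⟨?_, ?_⟩, ⟨?_, ?_⟩, ?_, ?_⟩ <;> linarith

lemma hexDist_lt_of_mem_downTriInt {p q r : Pt} (h : r ∈ downTriInt p q) :
    hexDist p r < hexDist p q := by
  simpa only [hexDist_neg] using hexDist_lt_of_mem_upTriInt (neg_mem_upTriInt_neg.2 h)

section EmptyTriangles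

variable {P : Finset Pt} {p q : Pt}

lemma emptyUp_comm : EmptyUp P p q ↔ EmptyUp P q p := by
  rw [EmptyUp, EmptyUp, upTriInt_comm]

lemma emptyDown_comm : EmptyDown P p q ↔ EmptyDown P q p := by
  rw [EmptyDown, EmptyDown, downTriInt_comm]

lemma emptyUp_neg_iff : EmptyUp (-P) (-p) (-q) ↔ EmptyDown P p q := by
  constructor
  · exact fun h r hr hmem => h (-r) (neg_mem_neg hr) (neg_mem_upTriInt_neg.2 hmem)
  · exact fun h r hr hmem => h (-r) (mem_neg'.1 hr) (neg_mem_upTriInt_neg.1 (by rwa [neg_neg]))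

lemma EmptyUp.mono {Q : Finset Pt} (h : EmptyUp P p q) (hQP : Q ⊆ P) : EmptyUp Q p q :=
  fun r hr => h r (hQP hr)

lemma EmptyDown.mono {Q : Finset Pt} (h : EmptyDown P p q) (hQP : Q ⊆ P) : EmptyDown Q p q :=
  fun r hr => h r (hQP hr)

end EmptyTriangles

def upGraph (P : Finset Pt) : SimpleGraph P where
  Adj p q := p ≠ q ∧ EmptyUp P p q
  symm := ⟨fun _ _ h => ⟨h.1.symm, emptyUp_comm.1 h.2⟩⟩

def downGraph (P : Finset Pt) : SimpleGraph P where
  Adj p q := p ≠ q ∧ EmptyDown P p q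
  symm := ⟨fun _ _ h => ⟨h.1.symm, emptyDown_comm.1 h.2⟩⟩

@[simp] lemma upGraph_adj {P : Finset Pt} {p q : P} :
    (upGraph P).Adj p q ↔ p ≠ q ∧ EmptyUp P p q :=
  Iff.rfl

@[simp] lemma downGraph_adj {P : Finset Pt} {p q : P} :
    (downGraph P).Adj p q ↔ p ≠ q ∧ EmptyDown P p q :=
  Iff.rfl

lemma theta6_eq_upGraph_sup_downGraph (P : Finset Pt) : theta6 P = upGraph P ⊔ downGraph P := by
  ext p q
  simp only [SimpleGraph.sup_adj, upGraph_adj, downGraph_adj, ← and_or_left]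
  rfl

def downGraphIsoUpGraphNeg (P : Finset Pt) : downGraph P ≃g upGraph (-P) where
  toEquiv := (Equiv.neg Pt).subtypeEquiv fun _ => by simp [mem_neg']
  map_rel_iff' {p q} := by
    rw [upGraph_adj, downGraph_adj, Equiv.injective _ |>.ne_iff]
    exact and_congr_right' emptyUp_neg_iff

section Counting

open scoped Classical

variable {P : Finset Pt}

/-- The empty triangle `△(p,q)`, `p` below `q`, is charged to whichever of `p`, `q` is a corner
of it, labelled by that corner: `0` top, `1` bottom left, `2` bottom right. -/
def upCharge (e : P × P) : P × Fin 3 :=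
  if cB e.1 < cB e.2 ∧ cC e.1 < cC e.2 then (e.2, 0)
  else if cB e.1 < cB e.2 then (e.1, 1) else (e.1, 2)

lemma upCharge_cases (hP : GenPos P) {p q : P} (hpq : p ≠ q) :
    upCharge (p, q) = (q, 0) ∧ cB p < cB q ∧ cC p < cC q ∨
    upCharge (p, q) = (p, 1) ∧ cB p < cB q ∧ cC q < cC p ∨
    upCharge (p, q) = (p, 2) ∧ cB q < cB p := by
  obtain ⟨-, hB, hC⟩ := hP.coord_ne p.2 q.2 (Subtype.coe_injective.ne hpq)
  unfold upCharge
  split_ifs with h₀ h₁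
  · exact Or.inl ⟨rfl, h₀⟩
  · exact Or.inr (Or.inl ⟨rfl, h₁, hC.symm.lt_of_le (not_lt.1 fun h => h₀ ⟨h₁, h⟩)⟩)
  · exact Or.inr (Or.inr ⟨rfl, hB.symm.lt_of_le (not_lt.1 h₁)⟩)

/-- Two empty triangles sharing a corner at the same point are nested, hence equal. -/
lemma upCharge_injOn (hP : GenPos P) :
    Set.InjOn upCharge {e : P × P | cA e.1 < cA e.2 ∧ EmptyUp P e.1 e.2} := by
  rintro ⟨p, q⟩ ⟨hpq, hE⟩ ⟨p', q'⟩ ⟨hpq', hE'⟩ h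
  have coord_ne : ∀ {a b : P}, a ≠ b → cA a ≠ cA b ∧ cB a ≠ cB b ∧ cC a ≠ cC b :=
    fun hab => hP.coord_ne (Subtype.prop _) (Subtype.prop _) (Subtype.coe_injective.ne hab)
  have ne_of_cA_lt : ∀ {a b : P}, cA a < cA b → a ≠ b := fun h hab => h.ne (hab ▸ rfl)
  rcases upCharge_cases hP (ne_of_cA_lt hpq) with ⟨h₁, hB, hC⟩ | ⟨h₁, hB, hC⟩ | ⟨h₁, hB⟩ <;>
    rcases upCharge_cases hP (ne_of_cA_lt hpq') with ⟨h₂, hB', hC'⟩ | ⟨h₂, hB', hC'⟩ | ⟨h₂, hB'⟩ <;>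
    rw [h₁, h₂, Prod.mk.injEq] at h <;> obtain ⟨rfl, hl⟩ := h <;> try exact absurd hl (by decide)
  · refine Prod.ext (by_contra fun hne => ?_) rfl
    rcases (coord_ne hne).1.lt_or_gt with h | h
    · exact hE p' p'.2 (mem_upTriInt_iff.2 ⟨Or.inl h, Or.inr hB', Or.inr hC'⟩)
    · exact hE' p p.2 (mem_upTriInt_iff.2 ⟨Or.inl h, Or.inr hB, Or.inr hC⟩)
  · refine Prod.ext rfl (by_contra fun hne => ?_)
    rcases (coord_ne hne).2.1.lt_or_gt with h | h
    · exact hE' q q.2 (mem_upTriInt_iff.2 ⟨Or.inl hpq, Or.inr h, Or.inl hC⟩)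
    · exact hE q' q'.2 (mem_upTriInt_iff.2 ⟨Or.inl hpq', Or.inr h, Or.inl hC'⟩)
  · refine Prod.ext rfl (by_contra fun hne => ?_)
    rcases (coord_ne hne).2.2.lt_or_gt with h | h
    · exact hE' q q.2 (mem_upTriInt_iff.2 ⟨Or.inl hpq, Or.inl hB, Or.inr h⟩)
    · exact hE q' q'.2 (mem_upTriInt_iff.2 ⟨Or.inl hpq', Or.inl hB', Or.inr h⟩)

lemma card_edgeFinset_upGraph_lt (hP : GenPos P) (hne : P.Nonempty) :
    #(upGraph P).edgeFinset < 3 * #P := by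
  have : Nonempty P := hne.to_subtype
  obtain ⟨s, -, hs⟩ := univ.exists_min_image (fun v : P => cA v) univ_nonempty
  rw [(upGraph P).card_edgeFinset_eq_card_filter_lt (fun v => cA v) fun v w h =>
    (hP.coord_ne v.2 w.2 (Subtype.coe_injective.ne h.1)).1]
  calc #{e : P × P | (upGraph P).Adj e.1 e.2 ∧ cA e.1 < cA e.2}
      ≤ #(univ.erase (s, (0 : Fin 3))) := by
        refine card_le_card_of_injOn upCharge (fun e he => ?_)
          ((upCharge_injOn hP).mono fun e he => ?_)
        · obtain ⟨hadj, hlt⟩ := by simpa using he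
          obtain ⟨p, q⟩ := e
          have hqs : q ≠ s := fun h => (hs p (mem_univ _)).not_gt (h ▸ hlt)
          rcases upCharge_cases hP hadj.1 with ⟨h, -⟩ | ⟨h, -⟩ | ⟨h, -⟩ <;> simp [h, hqs]
        · obtain ⟨hadj, hlt⟩ := by simpa using he
          exact ⟨hlt, hadj.2⟩
    _ < 3 * #P := by
        rw [card_erase_of_mem (mem_univ _), card_univ, Fintype.card_prod, Fintype.card_coe,
          Fintype.card_fin]
        have := hne.card_pos
        omega

lemma card_edgeFinset_downGraph_lt (hP : GenPos P) (hne : P.Nonempty) :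
    #(downGraph P).edgeFinset < 3 * #P := by
  rw [(downGraphIsoUpGraphNeg P).card_edgeFinset_eq, ← card_neg P]
  exact card_edgeFinset_upGraph_lt hP.neg hne.neg

lemma connected_upGraph_inf_downGraph (hne : P.Nonempty) :
    (upGraph P ⊓ downGraph P).Connected := by
  have : Nonempty P := hne.to_subtype
  refine ⟨SimpleGraph.preconnected_of_forall_exists_closer _ (fun p q : P => hexDist p q)
    fun p q hpq hadj => ?_⟩
  rw [SimpleGraph.inf_adj, upGraph_adj, downGraph_adj] at hadj
  obtain ⟨r, hr, hmem⟩ : ∃ r ∈ P, r ∈ upTriInt p q ∨ r ∈ downTriInt p q := by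
    by_contra! h
    exact hadj ⟨⟨hpq, fun r hr => (h r hr).1⟩, hpq, fun r hr => (h r hr).2⟩
  have closer : ∀ {a b : Pt}, r ∈ upTriInt a b ∨ r ∈ downTriInt a b → hexDist a r < hexDist a b :=
    fun h => h.elim hexDist_lt_of_mem_upTriInt hexDist_lt_of_mem_downTriInt
  refine ⟨⟨r, hr⟩, closer hmem, ?_⟩
  rw [hexDist_comm, hexDist_comm p]
  exact closer (by rwa [upTriInt_comm, downTriInt_comm])

lemma card_edgeFinset_theta6_lt (hP : GenPos P) (hne : P.Nonempty) :
    #(theta6 P).edgeFinset < 5 * #P := by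
  have hsplit : #(theta6 P).edgeFinset + #(upGraph P ⊓ downGraph P).edgeFinset =
      #(upGraph P).edgeFinset + #(downGraph P).edgeFinset := by
    have hsup : (theta6 P).edgeFinset = (upGraph P).edgeFinset ∪ (downGraph P).edgeFinset := by
      ext e
      simp [theta6_eq_upGraph_sup_downGraph]
    rw [hsup, SimpleGraph.edgeFinset_inf, card_union_add_card_inter]
  have hconn := (connected_upGraph_inf_downGraph hne).card_vert_le_card_edgeSet_add_one
  simp only [Nat.card_eq_fintype_card, ← SimpleGraph.edgeFinset_card, Fintype.card_coe] at hconn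
  have := card_edgeFinset_upGraph_lt hP hne
  have := card_edgeFinset_downGraph_lt hP hne
  omega

lemma exists_degree_theta6_le_nine (hP : GenPos P) (hne : P.Nonempty) :
    ∃ v, (theta6 P).degree v ≤ 9 := by
  have hsum : ∑ v, (theta6 P).degree v < ∑ _v : P, 10 := by
    rw [SimpleGraph.sum_degrees_eq_twice_card_edges, sum_const, card_univ, Fintype.card_coe,
      smul_eq_mul]
    have := card_edgeFinset_theta6_lt hP hne
    omega
  obtain ⟨v, -, hv⟩ := exists_lt_of_sum_lt hsum
  exact ⟨v, Nat.le_of_lt_succ hv⟩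

end Counting

lemma theta6_adj_of_subset {P Q : Finset Pt} (hQP : Q ⊆ P) {p q : Pt} (hp : p ∈ Q) (hq : q ∈ Q)
    (h : (theta6 P).Adj ⟨p, hQP hp⟩ ⟨q, hQP hq⟩) : (theta6 Q).Adj ⟨p, hp⟩ ⟨q, hq⟩ :=
  ⟨fun e => h.1 (Subtype.ext (Subtype.mk.inj e)), h.2.imp (·.mono hQP) (·.mono hQP)⟩

open scoped Classical in
lemma exists_card_theta6_adj_le_nine {P : Finset Pt} (hP : GenPos P) (s : Finset P)
    (hs : s.Nonempty) : ∃ v ∈ s, #{w ∈ s | (theta6 P).Adj v w} ≤ 9 := by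
  set Q := s.map (Function.Embedding.subtype _)
  have hQP : Q ⊆ P := fun x hx => by
    obtain ⟨w, -, rfl⟩ := mem_map.1 hx
    exact w.2
  obtain ⟨⟨u, huQ⟩, hu⟩ := exists_degree_theta6_le_nine (hP.mono hQP) hs.map
  obtain ⟨v, hv, rfl⟩ := mem_map.1 huQ
  refine ⟨v, hv, le_trans ?_ hu⟩
  rw [← SimpleGraph.card_neighborFinset_eq_degree, ← card_map (Function.Embedding.subtype _),
    ← card_map (Function.Embedding.subtype _)]
  refine card_le_card fun x hx => ?_
  simp only [mem_map, mem_filter, Function.Embedding.coe_subtype] at hx ⊢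
  obtain ⟨w, ⟨hws, hvw⟩, rfl⟩ := hx
  have hwQ : (w : Pt) ∈ Q := mem_map_of_mem _ hws
  exact ⟨⟨w, hwQ⟩, (SimpleGraph.mem_neighborFinset _ _ _).2 (theta6_adj_of_subset hQP huQ hwQ hvw),
    rfl⟩

/-- Every Θ₆-graph on `n` points in general position is 10-colorable and contains an
independent set of size at least `n/10`. -/
theorem theta6_colorable_and_indep (P : Finset Pt) (hP : GenPos P) :
    (theta6 P).Colorable 10 ∧
    ∃ I : Finset {x // x ∈ P},
      (∀ v ∈ I, ∀ w ∈ I, ¬ (theta6 P).Adj v w) ∧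
      (P.card : ℝ) / 10 ≤ (I.card : ℝ) := by
  classical
  have hcol : (theta6 P).Colorable 10 :=
    (theta6 P).colorable_succ_of_forall_exists_card_adj_le 9 (exists_card_theta6_adj_le_nine hP)
  refine ⟨hcol, ?_⟩
  simpa only [Fintype.card_coe, Nat.cast_ofNat] using hcol.exists_indep_card_ge
end
end
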